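/- Let f₁, f₂ : ℝⁿ → ℝ be simple and convex functions. Then for each q ∈ ℝⁿ the function v ↦ f₁(v) + f₂(q−v) attains its infimum, uniquely, at the point v_q characterized by ∇f₁(v_q) = ∇f₂(q − v_q); the infimal-convolution f₁ □ f₂ (q) := inf_{v ∈ ℝⁿ} (f₁(v) + f₂(q−v)) is a finite-valued simple and convex function, and the convolution of the 1-graphs equals the 1-graph of the infimal-convolution: (j¹f₁) □̲ (j¹f₂) = j¹(f₁ □ f₂). -/

import Mathlib

noncomputable section

/-- The 1-graph j¹f = {(f(q), q, ∇f(q)) | q ∈ ℝⁿ}. -/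
def oneJetGraph {n : ℕ} (f : EuclideanSpace ℝ (Fin n) → ℝ) :
    Set (ℝ × EuclideanSpace ℝ (Fin n) × EuclideanSpace ℝ (Fin n)) :=
  {x | ∃ q, x = (f q, q, gradient f q)}

/-- The convolution L₁ □̲ L₂ = {(u₁+u₂, q₁+q₂, p) | (u₁,q₁,p) ∈ L₁, (u₂,q₂,p) ∈ L₂}. -/
def LegConv {E : Type*} [AddCommGroup E] (L₁ L₂ : Set (ℝ × E × E)) : Set (ℝ × E × E) :=
  {x | ∃ u₁ q₁ u₂ q₂ p, (u₁, q₁, p) ∈ L₁ ∧ (u₂, q₂, p) ∈ L₂ ∧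
    x = (u₁ + u₂, q₁ + q₂, p)}

/-- g : X → X is a diffeomorphism: a smooth bijection with smooth inverse. -/
def IsDiffeo {X : Type*} [NormedAddCommGroup X] [NormedSpace ℝ X] (g : X → X) : Prop :=
  ∃ e : X ≃ X, ⇑e = g ∧ ContDiff ℝ (⊤ : ℕ∞) ⇑e ∧ ContDiff ℝ (⊤ : ℕ∞) ⇑e.symm

/-!
The minimisers of `v ↦ f₁ v + f₂ (q - v)` are exactly its critical points `∇ f₁ v = ∇ f₂ (q - v)`,
i.e. `v = ψ₁ p` with `ψ₁ p + ψ₂ p = q`, where `ψᵢ = (∇ fᵢ)⁻¹`. The map `η = ψ₁ + ψ₂` is injective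
by monotonicity of convex gradients, surjective because the objective is coercive (so minimisers
exist), and a diffeomorphism by the inverse function theorem: `Dψᵢ` is the inverse of a positive
semidefinite Hessian, so `Dψ₁ + Dψ₂` is injective. With `V = ψ₁ ∘ η⁻¹` the smooth minimiser map,
`f₁ □ f₂ = f₁ ∘ V + f₂ ∘ (id - V)` has gradient `η⁻¹` by the chain rule, and its 1-graph is
read off from the critical-point equation.
-/

open Set Filter Topology InnerProductSpace
open scoped RealInnerProductSpace Gradient ContDiff

section InfConv

variable {E : Type*} [AddCommGroup E] {f₁ f₂ : E → ℝ} {V : E → E} {q v : E}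

def infConv (f₁ f₂ : E → ℝ) (q : E) : ℝ :=
  sInf (range fun v => f₁ v + f₂ (q - v))

theorem infConv_eq_of_isMinOn (h : IsMinOn (fun w => f₁ w + f₂ (q - w)) univ v) :
    infConv f₁ f₂ q = f₁ v + f₂ (q - v) :=
  IsLeast.csInf_eq ⟨⟨v, rfl⟩, by rintro _ ⟨w, rfl⟩; exact h (mem_univ w)⟩

theorem infConv_eq_comp (hV : ∀ q, IsMinOn (fun w => f₁ w + f₂ (q - w)) univ (V q)) :
    infConv f₁ f₂ = fun q => f₁ (V q) + f₂ (q - V q) :=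
  funext fun q => infConv_eq_of_isMinOn (hV q)

theorem ConvexOn.infConv [Module ℝ E] (hf₁ : ConvexOn ℝ univ f₁) (hf₂ : ConvexOn ℝ univ f₂)
    (hV : ∀ q, IsMinOn (fun w => f₁ w + f₂ (q - w)) univ (V q)) :
    ConvexOn ℝ univ (infConv f₁ f₂) := by
  refine ⟨convex_univ, fun q _ q' _ a b ha hb hab => ?_⟩
  rw [infConv_eq_comp hV]
  have hsplit : a • q + b • q' - (a • V q + b • V q') = a • (q - V q) + b • (q' - V q') := by
    module
  calc f₁ (V (a • q + b • q')) + f₂ (a • q + b • q' - V (a • q + b • q'))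
      ≤ f₁ (a • V q + b • V q') + f₂ (a • (q - V q) + b • (q' - V q')) :=
        hsplit ▸ hV _ (mem_univ _)
    _ ≤ a • (f₁ (V q) + f₂ (q - V q)) + b • (f₁ (V q') + f₂ (q' - V q')) := by
        have h₁ := hf₁.2 (mem_univ (V q)) (mem_univ (V q')) ha hb hab
        have h₂ := hf₂.2 (mem_univ (q - V q)) (mem_univ (q' - V q')) ha hb hab
        simp only [smul_eq_mul] at h₁ h₂ ⊢
        linarith

end InfConv

section Gradient

variable {E : Type*} [NormedAddCommGroup E] [InnerProductSpace ℝ E] [CompleteSpace E]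
  {f f₁ f₂ : E → ℝ} {V : E → E} {x y q v : E}

theorem IsLocalMin.hasGradientAt_eq_zero {g : E} (hmin : IsLocalMin f x)
    (hf : HasGradientAt f g x) : g = 0 := by
  simpa using hmin.hasFDerivAt_eq_zero hf.hasFDerivAt

theorem ConvexOn.add_inner_gradient_le (hf : ConvexOn ℝ univ f) (hx : DifferentiableAt ℝ f x)
    (y : E) : f x + ⟪∇ f x, y - x⟫ ≤ f y := by
  have hfx : HasFDerivAt f (toDual ℝ E (∇ f x)) (AffineMap.lineMap (k := ℝ) x y 0) := by
    simpa using hx.hasGradientAt.hasFDerivAt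
  have hline : HasDerivAt (f ∘ AffineMap.lineMap (k := ℝ) x y) ⟪∇ f x, y - x⟫ 0 := by
    simpa only [toDual_apply_apply] using hfx.comp_hasDerivAt 0 AffineMap.hasDerivAt_lineMap
  have := (hf.comp_affineMap (AffineMap.lineMap x y)).le_slope_of_hasDerivAt
    (mem_univ 0) (mem_univ 1) one_pos hline
  simp only [slope_def_field, Function.comp_apply, AffineMap.lineMap_apply_one,
    AffineMap.lineMap_apply_zero, sub_zero, div_one] at this
  linarith

theorem ConvexOn.inner_gradient_sub_nonneg (hf : ConvexOn ℝ univ f) (hx : DifferentiableAt ℝ f x)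
    (hy : DifferentiableAt ℝ f y) : 0 ≤ ⟪∇ f x - ∇ f y, x - y⟫ := by
  have hxy := hf.add_inner_gradient_le hx y
  have hyx := hf.add_inner_gradient_le hy x
  rw [← neg_sub x y, inner_neg_right] at hxy
  rw [inner_sub_left]
  linarith

/-- The subgradient inequality at `x` being an equality at `y` makes `y` a minimum of
`f - ⟪∇ f x, ·⟫`. -/
theorem ConvexOn.gradient_eq_of_inner_gradient_sub_eq_zero (hf : ConvexOn ℝ univ f)
    (hd : Differentiable ℝ f) (h : ⟪∇ f x - ∇ f y, x - y⟫ = 0) : ∇ f x = ∇ f y := by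
  have hmin : IsLocalMin (fun z => f z - ⟪∇ f x, z⟫) y := by
    refine IsMinOn.isLocalMin (fun z _ => ?_) univ_mem
    have hxy := hf.add_inner_gradient_le (hd x) y
    have hyx := hf.add_inner_gradient_le (hd y) x
    have hxz := hf.add_inner_gradient_le (hd x) z
    show f y - ⟪∇ f x, y⟫ ≤ f z - ⟪∇ f x, z⟫
    simp only [inner_sub_right, inner_sub_left] at *
    linarith
  have hgrad : HasGradientAt (fun z => f z - ⟪∇ f x, z⟫) (∇ f y - ∇ f x) y := by
    rw [hasGradientAt_iff_hasFDerivAt, map_sub]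
    exact (hd y).hasGradientAt.hasFDerivAt.sub (toDual ℝ E (∇ f x)).hasFDerivAt
  exact (sub_eq_zero.mp (hmin.hasGradientAt_eq_zero hgrad)).symm

theorem hasGradientAt_add_comp_const_sub (hd₁ : DifferentiableAt ℝ f₁ v)
    (hd₂ : DifferentiableAt ℝ f₂ (q - v)) :
    HasGradientAt (fun w => f₁ w + f₂ (q - w)) (∇ f₁ v - ∇ f₂ (q - v)) v := by
  rw [hasGradientAt_iff_hasFDerivAt, map_sub, sub_eq_add_neg]
  have h₂ : HasFDerivAt (fun w => f₂ (q - w)) _ v :=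
    hd₂.hasGradientAt.hasFDerivAt.comp v ((hasFDerivAt_id v).const_sub q)
  refine (hd₁.hasGradientAt.hasFDerivAt.add h₂).congr_fderiv ?_
  ext
  simp

theorem gradient_eq_of_isMinOn_add_comp_const_sub (hd₁ : DifferentiableAt ℝ f₁ v)
    (hd₂ : DifferentiableAt ℝ f₂ (q - v)) (hmin : IsMinOn (fun w => f₁ w + f₂ (q - w)) univ v) :
    ∇ f₁ v = ∇ f₂ (q - v) :=
  sub_eq_zero.mp <| (hmin.isLocalMin univ_mem).hasGradientAt_eq_zero
    (hasGradientAt_add_comp_const_sub hd₁ hd₂)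

theorem ConvexOn.isMinOn_add_comp_const_sub (hf₁ : ConvexOn ℝ univ f₁) (hf₂ : ConvexOn ℝ univ f₂)
    (hd₁ : DifferentiableAt ℝ f₁ v) (hd₂ : DifferentiableAt ℝ f₂ (q - v))
    (h : ∇ f₁ v = ∇ f₂ (q - v)) : IsMinOn (fun w => f₁ w + f₂ (q - w)) univ v := by
  intro w _
  have h₁ := hf₁.add_inner_gradient_le hd₁ w
  have h₂ := hf₂.add_inner_gradient_le hd₂ (q - w)
  rw [← h, show q - w - (q - v) = -(w - v) by abel, inner_neg_right] at h₂
  change f₁ v + f₂ (q - v) ≤ f₁ w + f₂ (q - w)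
  linarith

theorem hasGradientAt_infConv
    (hV : ∀ q, IsMinOn (fun w => f₁ w + f₂ (q - w)) univ (V q)) (hVd : DifferentiableAt ℝ V q)
    (hd₁ : DifferentiableAt ℝ f₁ (V q)) (hd₂ : DifferentiableAt ℝ f₂ (q - V q)) :
    HasGradientAt (infConv f₁ f₂) (∇ f₁ (V q)) q := by
  have hcrit := gradient_eq_of_isMinOn_add_comp_const_sub hd₁ hd₂ (hV q)
  rw [infConv_eq_comp hV, hasGradientAt_iff_hasFDerivAt]
  have h₁ := hd₁.hasGradientAt.hasFDerivAt.comp q hVd.hasFDerivAt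
  have h₂ : HasFDerivAt (fun z => f₂ (z - V z)) _ q :=
    hd₂.hasGradientAt.hasFDerivAt.comp q ((hasFDerivAt_id q).sub hVd.hasFDerivAt)
  refine (h₁.add h₂).congr_fderiv ?_
  ext u
  simp [hcrit]

end Gradient

theorem HasFDerivAt.inner_apply_self_nonneg_of_monotone {E : Type*} [NormedAddCommGroup E]
    [InnerProductSpace ℝ E] {g : E → E} {B : E →L[ℝ] E} {x : E}
    (hmono : ∀ a b, 0 ≤ ⟪g a - g b, a - b⟫) (hB : HasFDerivAt g B x) (u : E) :
    0 ≤ ⟪B u, u⟫ := by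
  have hρ : HasDerivAt (fun t : ℝ => ⟪g (x + t • u), u⟫) ⟪B u, u⟫ 0 := by
    have hline : HasDerivAt (fun t : ℝ => x + t • u) u 0 := by
      simpa using ((hasDerivAt_id (0 : ℝ)).smul_const u).const_add x
    have hg : HasFDerivAt g B (x + (0 : ℝ) • u) := by simpa using hB
    simpa using (hg.comp_hasDerivAt 0 hline).inner ℝ (hasDerivAt_const 0 u)
  refine ge_of_tendsto hρ.tendsto_slope_zero_right ?_
  filter_upwards [self_mem_nhdsWithin] with t (ht : 0 < t)
  have := hmono (x + t • u) x
  rw [add_sub_cancel_left, inner_smul_right] at this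
  simp only [zero_add, zero_smul, add_zero, smul_eq_mul, ← inner_sub_left]
  exact mul_nonneg (inv_nonneg.mpr ht.le) (nonneg_of_mul_nonneg_right this ht)

namespace ContinuousLinearMap
variable {E : Type*} [NormedAddCommGroup E] [InnerProductSpace ℝ E] {T S A : E →L[ℝ] E}

/-- The quadratic form `t ↦ ⟪T (x + t • T x), x + t • T x⟫ = 2 t ‖T x‖² + t² ⟪T (T x), T x⟫`
is nonnegative, so its discriminant `4 ‖T x‖⁴` is not positive. -/
theorem IsPositive.apply_eq_zero_of_inner_self_eq_zero (hT : T.IsPositive) {x : E}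
    (hx : ⟪T x, x⟫ = 0) : T x = 0 := by
  have hquad : ∀ t : ℝ, 0 ≤ ⟪T (T x), T x⟫ * (t * t) + 2 * ‖T x‖ ^ 2 * t + 0 := by
    intro t
    have h := hT.inner_nonneg_left (x + t • T x)
    rw [map_add, map_smul, inner_add_left, inner_add_right, inner_add_right,
      real_inner_smul_left, real_inner_smul_right, real_inner_smul_left, real_inner_smul_right,
      hx, hT.inner_left_eq_inner_right (T x) x, real_inner_self_eq_norm_sq] at h
    linarith
  have hdisc := discrim_le_zero hquad
  rw [discrim] at hdisc
  have hnorm : ‖T x‖ ^ 2 = 0 := by nlinarith [sq_nonneg (‖T x‖ ^ 2)]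
  simpa using hnorm

theorem IsPositive.injective_add (hT : T.IsPositive) (hS : S.IsPositive)
    (hinj : Function.Injective T) : Function.Injective (T + S) := by
  refine (injective_iff_map_eq_zero (T + S)).mpr fun x hx => hinj ?_
  have hsum : ⟪T x, x⟫ + ⟪S x, x⟫ = 0 := by
    rw [← inner_add_left, ← add_apply, hx, inner_zero_left]
  rw [map_zero]
  exact hT.apply_eq_zero_of_inner_self_eq_zero
    (le_antisymm (by linarith [hS.inner_nonneg_left x]) (hT.inner_nonneg_left x))

theorem IsPositive.of_comp_eq_id (hT : T.IsPositive) (h : T ∘L A = .id ℝ E) : A.IsPositive := by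
  have hTA : ∀ u, T (A u) = u := fun u => by simpa using congr($h u)
  refine (isPositive_iff A).mpr ⟨fun u v => ?_, fun u => ?_⟩
  · change ⟪A u, v⟫ = ⟪u, A v⟫
    conv_lhs => rw [← hTA v]
    conv_rhs => rw [← hTA u]
    exact (hT.inner_left_eq_inner_right (A u) (A v)).symm
  · nth_rw 2 [← hTA u]
    rw [real_inner_comm]
    exact hT.inner_nonneg_left (A u)

end ContinuousLinearMap

section Hessian

variable {E : Type*} [NormedAddCommGroup E] [InnerProductSpace ℝ E] [CompleteSpace E]
  {f : E → ℝ}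

theorem gradient_eq_toDual_symm_comp_fderiv : ∇ f = (toDual ℝ E).symm ∘ fderiv ℝ f := rfl

theorem inner_fderiv_gradient_apply (x u v : E) :
    ⟪fderiv ℝ (∇ f) x u, v⟫ = fderiv ℝ (fderiv ℝ f) x u v := by
  rw [gradient_eq_toDual_symm_comp_fderiv, LinearIsometryEquiv.comp_fderiv]
  exact toDual_symm_apply

theorem ContDiff.differentiable_gradient (hf : ContDiff ℝ 2 f) : Differentiable ℝ (∇ f) := by
  rw [gradient_eq_toDual_symm_comp_fderiv]
  exact (toDual ℝ E).symm.differentiable.comp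
    ((hf.fderiv_right (m := 1) le_rfl).differentiable one_ne_zero)

theorem ConvexOn.isPositive_fderiv_gradient (hconv : ConvexOn ℝ univ f) (hf : ContDiff ℝ 2 f)
    (x : E) : (fderiv ℝ (∇ f) x).IsPositive := by
  have hd : Differentiable ℝ f := hf.differentiable two_ne_zero
  refine (ContinuousLinearMap.isPositive_iff _).mpr ⟨fun u v => ?_, fun u => ?_⟩
  · show ⟪fderiv ℝ (∇ f) x u, v⟫ = ⟪u, fderiv ℝ (∇ f) x v⟫
    rw [real_inner_comm _ u, inner_fderiv_gradient_apply, inner_fderiv_gradient_apply]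
    exact (hf.contDiffAt.isSymmSndFDerivAt (by simp [minSmoothness_of_isRCLikeNormedField])) u v
  · exact (hf.differentiable_gradient x).hasFDerivAt.inner_apply_self_nonneg_of_monotone
      (fun a b => hconv.inner_gradient_sub_nonneg (hd a) (hd b)) u

theorem ContDiff.fderiv_gradient_comp_fderiv_symm (hf : ContDiff ℝ 2 f) {e : E ≃ E}
    (he : ⇑e = ∇ f) {p : E} (hp : DifferentiableAt ℝ e.symm p) :
    fderiv ℝ (∇ f) (e.symm p) ∘L fderiv ℝ e.symm p = .id ℝ E := by
  have hcomp : HasFDerivAt (∇ f ∘ e.symm) (fderiv ℝ (∇ f) (e.symm p) ∘L fderiv ℝ e.symm p) p :=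
    (hf.differentiable_gradient _).hasFDerivAt.comp p hp.hasFDerivAt
  rw [show ∇ f ∘ e.symm = id by rw [← he, e.self_comp_symm]] at hcomp
  exact hcomp.unique (hasFDerivAt_id p)

end Hessian

section Coercive

variable {E : Type*} [NormedAddCommGroup E] [InnerProductSpace ℝ E] [CompleteSpace E]
  [ProperSpace E] {f f₁ f₂ : E → ℝ} {ψ : E → E}

/-- With `p = c + ‖v‖⁻¹ • v`, the subgradient inequality at `ψ p` gives
`f v ≥ ⟪p, v⟫ - (⟪p, ψ p⟫ - f (ψ p))`, and the bracket is bounded on the compact ball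
`‖p - c‖ ≤ 1`. -/
theorem ConvexOn.exists_inner_add_norm_sub_le (hf : ConvexOn ℝ univ f) (hd : Differentiable ℝ f)
    (hψ : ∀ p, ∇ f (ψ p) = p) (hψc : Continuous ψ) (c : E) :
    ∃ K, ∀ v, ⟪c, v⟫ + ‖v‖ - K ≤ f v := by
  obtain ⟨p₀, -, hp₀⟩ := (isCompact_closedBall c 1).exists_isMaxOn
    (f := fun p => ⟪p, ψ p⟫ - f (ψ p)) (Metric.nonempty_closedBall.mpr zero_le_one)
    ((continuous_id.inner hψc).sub (hd.continuous.comp hψc)).continuousOn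
  refine ⟨⟪p₀, ψ p₀⟫ - f (ψ p₀), fun v => ?_⟩
  set p := c + ‖v‖⁻¹ • v
  have hp : p ∈ Metric.closedBall c 1 := by
    rw [mem_closedBall_iff_norm, add_sub_cancel_left, norm_smul, norm_inv, norm_norm]
    exact inv_mul_le_one_of_le₀ le_rfl (norm_nonneg v)
  have hpv : ⟪p, v⟫ = ⟪c, v⟫ + ‖v‖ := by
    rw [inner_add_left, real_inner_smul_left, real_inner_self_eq_norm_sq]
    rcases eq_or_ne ‖v‖ 0 with h | h
    · simp [h]
    · field_simp
  have hsub := hf.add_inner_gradient_le (hd (ψ p)) v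
  rw [hψ, inner_sub_right, hpv] at hsub
  have hmax : ⟪p, ψ p⟫ - f (ψ p) ≤ ⟪p₀, ψ p₀⟫ - f (ψ p₀) := hp₀ hp
  linarith

theorem ConvexOn.exists_isMinOn_add_comp_const_sub (hf₁ : ConvexOn ℝ univ f₁)
    (hf₂ : ConvexOn ℝ univ f₂) (hd₁ : Differentiable ℝ f₁) (hd₂ : Differentiable ℝ f₂)
    (hψ : ∀ p, ∇ f₁ (ψ p) = p) (hψc : Continuous ψ) (q : E) :
    ∃ v, IsMinOn (fun w => f₁ w + f₂ (q - w)) univ v := by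
  obtain ⟨K, hK⟩ := hf₁.exists_inner_add_norm_sub_le hd₁ hψ hψc (∇ f₂ 0)
  have hbound : ∀ w, ‖w‖ + (f₂ 0 + ⟪∇ f₂ 0, q⟫ - K) ≤ f₁ w + f₂ (q - w) := fun w => by
    have h₂ := hf₂.add_inner_gradient_le (hd₂ 0) (q - w)
    rw [sub_zero, inner_sub_right] at h₂
    linarith [hK w]
  have hcont : Continuous fun w => f₁ w + f₂ (q - w) :=
    hd₁.continuous.add (hd₂.continuous.comp (continuous_const.sub continuous_id))
  obtain ⟨v, hv⟩ := hcont.exists_forall_le <| tendsto_atTop_mono hbound <|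
    tendsto_atTop_add_const_right _ _ tendsto_norm_cocompact_atTop
  exact ⟨v, fun w _ => hv w⟩

end Coercive

theorem Equiv.contDiff_symm_of_injective_fderiv {E : Type*} [NormedAddCommGroup E]
    [NormedSpace ℝ E] [FiniteDimensional ℝ E] {n : WithTop ℕ∞} (e : E ≃ E) (hn : n ≠ 0)
    (he : ContDiff ℝ n e) (hinj : ∀ x, Function.Injective (fderiv ℝ e x)) :
    ContDiff ℝ n e.symm := by
  let L x : E ≃L[ℝ] E :=
    (LinearEquiv.ofInjectiveEndo (fderiv ℝ e x : E →ₗ[ℝ] E) (hinj x)).toContinuousLinearEquiv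
  have hL : ∀ x, HasStrictFDerivAt e (L x : E →L[ℝ] E) x := fun x =>
    he.contDiffAt.hasStrictFDerivAt hn
  exact (e.toHomeomorphOfContinuousOpen he.continuous (isOpenMap_of_hasStrictFDerivAt_equiv hL)
    ).contDiff_symm (fun x => (hL x).hasFDerivAt) he

section SimpleConvex

variable {E : Type*} [NormedAddCommGroup E] [InnerProductSpace ℝ E] [CompleteSpace E]

/-- Smoothness of `e = ∇ f` is not required: it follows from that of `f`. -/
structure IsSimpleConvex (f : E → ℝ) (e : E ≃ E) : Prop where
  contDiff : ContDiff ℝ ∞ f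
  coe_eq_gradient : ⇑e = ∇ f
  contDiff_symm : ContDiff ℝ ∞ e.symm
  convexOn : ConvexOn ℝ univ f

namespace IsSimpleConvex

variable {f f₁ f₂ : E → ℝ} {e e₁ e₂ η : E ≃ E} {q v : E}

theorem differentiable (h : IsSimpleConvex f e) : Differentiable ℝ f :=
  h.contDiff.differentiable (by simp)

theorem gradient_symm_apply (h : IsSimpleConvex f e) (p : E) : ∇ f (e.symm p) = p := by
  rw [← h.coe_eq_gradient, e.apply_symm_apply]

theorem symm_gradient_apply (h : IsSimpleConvex f e) (v : E) : e.symm (∇ f v) = v := by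
  rw [← h.coe_eq_gradient, e.symm_apply_apply]

theorem injective_add_symm (h₁ : IsSimpleConvex f₁ e₁) (h₂ : IsSimpleConvex f₂ e₂) :
    Function.Injective (⇑e₁.symm + ⇑e₂.symm) := by
  intro a b hab
  have hmono₁ := h₁.convexOn.inner_gradient_sub_nonneg (h₁.differentiable (e₁.symm a))
    (h₁.differentiable (e₁.symm b))
  have hmono₂ := h₂.convexOn.inner_gradient_sub_nonneg (h₂.differentiable (e₂.symm a))
    (h₂.differentiable (e₂.symm b))
  simp only [gradient_symm_apply h₁, gradient_symm_apply h₂] at hmono₁ hmono₂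
  have hsum : ⟪a - b, e₁.symm a - e₁.symm b⟫ + ⟪a - b, e₂.symm a - e₂.symm b⟫ = 0 := by
    have hab' : e₁.symm a + e₂.symm a = e₁.symm b + e₂.symm b := hab
    rw [← inner_add_right, sub_add_sub_comm, hab', sub_self, inner_zero_right]
  have hflat := h₁.convexOn.gradient_eq_of_inner_gradient_sub_eq_zero h₁.differentiable
    (x := e₁.symm a) (y := e₁.symm b) (by simp only [gradient_symm_apply h₁]; linarith)
  simpa only [gradient_symm_apply h₁] using hflat

theorem gradient_eq_gradient_iff (h₁ : IsSimpleConvex f₁ e₁) (h₂ : IsSimpleConvex f₂ e₂)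
    (hη : ⇑η = ⇑e₁.symm + ⇑e₂.symm) : ∇ f₁ v = ∇ f₂ (q - v) ↔ v = e₁.symm (η.symm q) := by
  have hη_apply : η (∇ f₁ v) = v + e₂.symm (∇ f₁ v) := by
    rw [hη, Pi.add_apply, h₁.symm_gradient_apply]
  rw [Equiv.eq_symm_apply, Equiv.eq_symm_apply, h₁.coe_eq_gradient, hη_apply,
    ← eq_sub_iff_add_eq', ← h₂.coe_eq_gradient, Equiv.symm_apply_eq]

theorem isMinOn_iff (h₁ : IsSimpleConvex f₁ e₁) (h₂ : IsSimpleConvex f₂ e₂)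
    (hη : ⇑η = ⇑e₁.symm + ⇑e₂.symm) :
    IsMinOn (fun w => f₁ w + f₂ (q - w)) univ v ↔ v = e₁.symm (η.symm q) := by
  rw [← gradient_eq_gradient_iff h₁ h₂ hη]
  exact ⟨gradient_eq_of_isMinOn_add_comp_const_sub (h₁.differentiable v) (h₂.differentiable _),
    h₁.convexOn.isMinOn_add_comp_const_sub h₂.convexOn (h₁.differentiable v) (h₂.differentiable _)⟩

theorem surjective_add_symm [FiniteDimensional ℝ E] (h₁ : IsSimpleConvex f₁ e₁)
    (h₂ : IsSimpleConvex f₂ e₂) : Function.Surjective (⇑e₁.symm + ⇑e₂.symm) := by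
  intro q
  obtain ⟨v, hv⟩ := h₁.convexOn.exists_isMinOn_add_comp_const_sub h₂.convexOn h₁.differentiable
    h₂.differentiable h₁.gradient_symm_apply h₁.contDiff_symm.continuous q
  have hcrit := gradient_eq_of_isMinOn_add_comp_const_sub (h₁.differentiable v)
    (h₂.differentiable _) hv
  refine ⟨∇ f₁ v, ?_⟩
  rw [Pi.add_apply, h₁.symm_gradient_apply, hcrit, h₂.symm_gradient_apply, add_sub_cancel]

theorem contDiff_two (h : IsSimpleConvex f e) : ContDiff ℝ 2 f :=
  h.contDiff.of_le (by norm_cast)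

theorem injective_fderiv_add_symm (h₁ : IsSimpleConvex f₁ e₁) (h₂ : IsSimpleConvex f₂ e₂)
    (p : E) : Function.Injective (fderiv ℝ (⇑e₁.symm + ⇑e₂.symm) p) := by
  have hd₁ := h₁.contDiff_symm.differentiable (by simp) p
  have hd₂ := h₂.contDiff_symm.differentiable (by simp) p
  have hinv₁ := h₁.contDiff_two.fderiv_gradient_comp_fderiv_symm h₁.coe_eq_gradient hd₁
  have hinv₂ := h₂.contDiff_two.fderiv_gradient_comp_fderiv_symm h₂.coe_eq_gradient hd₂
  have hpos₁ := (h₁.convexOn.isPositive_fderiv_gradient h₁.contDiff_two _).of_comp_eq_id hinv₁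
  have hpos₂ := (h₂.convexOn.isPositive_fderiv_gradient h₂.contDiff_two _).of_comp_eq_id hinv₂
  rw [fderiv_add hd₁ hd₂]
  exact hpos₁.injective_add hpos₂ (Function.LeftInverse.injective fun u => congr($hinv₁ u))

theorem contDiff_symm_of_coe_eq_add_symm [FiniteDimensional ℝ E] (h₁ : IsSimpleConvex f₁ e₁)
    (h₂ : IsSimpleConvex f₂ e₂) (hη : ⇑η = ⇑e₁.symm + ⇑e₂.symm) : ContDiff ℝ ∞ η.symm :=
  η.contDiff_symm_of_injective_fderiv (by simp) (hη ▸ h₁.contDiff_symm.add h₂.contDiff_symm)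
    (hη ▸ injective_fderiv_add_symm h₁ h₂)

end IsSimpleConvex

end SimpleConvex

theorem legConv_oneJetGraph_eq {n : ℕ} {f₁ f₂ F : EuclideanSpace ℝ (Fin n) → ℝ}
    {V : EuclideanSpace ℝ (Fin n) → EuclideanSpace ℝ (Fin n)}
    (hcrit : ∀ q v, ∇ f₁ v = ∇ f₂ (q - v) ↔ v = V q) (hF : ∀ q, F q = f₁ (V q) + f₂ (q - V q))
    (hgrad : ∀ q, ∇ F q = ∇ f₁ (V q)) :
    LegConv (oneJetGraph f₁) (oneJetGraph f₂) = oneJetGraph F := by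
  ext x
  constructor
  · rintro ⟨_, a, _, b, _, ⟨_, ha⟩, ⟨_, hb⟩, rfl⟩
    simp only [Prod.mk.injEq] at ha hb
    obtain ⟨rfl, rfl, rfl⟩ := ha
    obtain ⟨rfl, rfl, hab⟩ := hb
    have hV : a = V (a + b) := (hcrit _ _).mp (by rwa [add_sub_cancel_left])
    refine ⟨a + b, ?_⟩
    rw [hF, hgrad, ← hV, add_sub_cancel_left]
  · rintro ⟨q, rfl⟩
    refine ⟨_, _, f₂ (q - V q), q - V q, _, ⟨V q, rfl⟩, ⟨q - V q, ?_⟩, ?_⟩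
    · rw [(hcrit q (V q)).mpr rfl]
    · rw [hF, hgrad, add_sub_cancel]

theorem stmt11_general (n : ℕ) (f₁ f₂ : EuclideanSpace ℝ (Fin n) → ℝ)
    (φ₁ φ₂ : EuclideanSpace ℝ (Fin n) ≃ EuclideanSpace ℝ (Fin n))
    (hf₁ : ContDiff ℝ (⊤ : ℕ∞) f₁) (hf₂ : ContDiff ℝ (⊤ : ℕ∞) f₂)
    (hφ₁ : ⇑φ₁ = gradient f₁) (hφ₂ : ⇑φ₂ = gradient f₂)
    (hφ₁i : ContDiff ℝ (⊤ : ℕ∞) ⇑φ₁.symm)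
    (hφ₂i : ContDiff ℝ (⊤ : ℕ∞) ⇑φ₂.symm)
    (hconv₁ : ConvexOn ℝ Set.univ f₁) (hconv₂ : ConvexOn ℝ Set.univ f₂) :
    (∀ q, ∃ v,
      gradient f₁ v = gradient f₂ (q - v) ∧
      (∀ w, gradient f₁ w = gradient f₂ (q - w) → w = v) ∧
      (∀ w, w ≠ v → f₁ v + f₂ (q - v) < f₁ w + f₂ (q - w)) ∧
      sInf (Set.range fun v' => f₁ v' + f₂ (q - v')) = f₁ v + f₂ (q - v)) ∧
    ContDiff ℝ (⊤ : ℕ∞) (fun q => sInf (Set.range fun v => f₁ v + f₂ (q - v))) ∧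
    IsDiffeo (gradient (fun q => sInf (Set.range fun v => f₁ v + f₂ (q - v)))) ∧
    ConvexOn ℝ Set.univ (fun q => sInf (Set.range fun v => f₁ v + f₂ (q - v))) ∧
    LegConv (oneJetGraph f₁) (oneJetGraph f₂)
      = oneJetGraph (fun q => sInf (Set.range fun v => f₁ v + f₂ (q - v))) := by
  have h₁ : IsSimpleConvex f₁ φ₁ := ⟨hf₁, hφ₁, hφ₁i, hconv₁⟩
  have h₂ : IsSimpleConvex f₂ φ₂ := ⟨hf₂, hφ₂, hφ₂i, hconv₂⟩
  obtain ⟨η, hη⟩ : ∃ η : _ ≃ _, ⇑η = ⇑φ₁.symm + ⇑φ₂.symm :=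
    ⟨.ofBijective _ ⟨h₁.injective_add_symm h₂, h₁.surjective_add_symm h₂⟩, rfl⟩
  set V := fun q => φ₁.symm (η.symm q)
  have hcrit q v := h₁.gradient_eq_gradient_iff h₂ hη (q := q) (v := v)
  have hmin q v := h₁.isMinOn_iff h₂ hη (q := q) (v := v)
  have hVmin q : IsMinOn (fun w => f₁ w + f₂ (q - w)) univ (V q) := (hmin q _).mpr rfl
  have hηs := h₁.contDiff_symm_of_coe_eq_add_symm h₂ hη
  have hVs : ContDiff ℝ ∞ V := h₁.contDiff_symm.comp hηs
  have hgrad q : ∇ (infConv f₁ f₂) q = ∇ f₁ (V q) :=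
    (hasGradientAt_infConv hVmin (hVs.differentiable (by simp) q) (h₁.differentiable _)
      (h₂.differentiable _)).gradient
  have hstrict q w (hw : w ≠ V q) : f₁ (V q) + f₂ (q - V q) < f₁ w + f₂ (q - w) :=
    lt_of_le_of_ne (hVmin q (mem_univ w)) fun heq =>
      hw ((hmin q w).mp fun z _ => heq.ge.trans (hVmin q (mem_univ z)))
  refine ⟨fun q => ⟨V q, (hcrit q _).mpr rfl, fun w => (hcrit q w).mp, hstrict q,
      infConv_eq_of_isMinOn (hVmin q)⟩, ?_, ?_, hconv₁.infConv hconv₂ hVmin,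
    legConv_oneJetGraph_eq hcrit (fun q => infConv_eq_of_isMinOn (hVmin q)) hgrad⟩
  · show ContDiff ℝ ∞ (infConv f₁ f₂)
    rw [infConv_eq_comp hVmin]
    exact (hf₁.comp hVs).add (hf₂.comp (contDiff_id.sub hVs))
  · refine ⟨η.symm, funext fun q => ?_, hηs, ?_⟩
    · rw [eq_comm, ← h₁.gradient_symm_apply (η.symm q)]
      exact hgrad q
    · rw [η.symm_symm, hη]
      exact h₁.contDiff_symm.add h₂.contDiff_symm

/-- Let f₁, f₂ : ℝⁿ → ℝ be simple (smooth, gradients being the diffeomorphisms φ₁, φ₂)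
and convex.  Then for each q the function v ↦ f₁(v) + f₂(q−v) attains its infimum,
uniquely, at the point v_q characterized by ∇f₁(v_q) = ∇f₂(q − v_q); the
infimal-convolution (f₁ □ f₂)(q) = inf_v (f₁(v) + f₂(q−v)) is a finite-valued simple
and convex function, and (j¹f₁) □̲ (j¹f₂) = j¹(f₁ □ f₂). -/
theorem stmt11 (n : ℕ) (f₁ f₂ : EuclideanSpace ℝ (Fin n) → ℝ)
    (φ₁ φ₂ : EuclideanSpace ℝ (Fin n) ≃ EuclideanSpace ℝ (Fin n))
    (hf₁ : ContDiff ℝ (⊤ : ℕ∞) f₁) (hf₂ : ContDiff ℝ (⊤ : ℕ∞) f₂)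
    (hφ₁ : ⇑φ₁ = gradient f₁) (hφ₂ : ⇑φ₂ = gradient f₂)
    (hφ₁s : ContDiff ℝ (⊤ : ℕ∞) ⇑φ₁) (hφ₁i : ContDiff ℝ (⊤ : ℕ∞) ⇑φ₁.symm)
    (hφ₂s : ContDiff ℝ (⊤ : ℕ∞) ⇑φ₂) (hφ₂i : ContDiff ℝ (⊤ : ℕ∞) ⇑φ₂.symm)
    (hconv₁ : ConvexOn ℝ Set.univ f₁) (hconv₂ : ConvexOn ℝ Set.univ f₂) :
    (∀ q, ∃ v,
      gradient f₁ v = gradient f₂ (q - v) ∧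
      (∀ w, gradient f₁ w = gradient f₂ (q - w) → w = v) ∧
      (∀ w, w ≠ v → f₁ v + f₂ (q - v) < f₁ w + f₂ (q - w)) ∧
      sInf (Set.range fun v' => f₁ v' + f₂ (q - v')) = f₁ v + f₂ (q - v)) ∧
    ContDiff ℝ (⊤ : ℕ∞) (fun q => sInf (Set.range fun v => f₁ v + f₂ (q - v))) ∧
    IsDiffeo (gradient (fun q => sInf (Set.range fun v => f₁ v + f₂ (q - v)))) ∧
    ConvexOn ℝ Set.univ (fun q => sInf (Set.range fun v => f₁ v + f₂ (q - v))) ∧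
    LegConv (oneJetGraph f₁) (oneJetGraph f₂)
      = oneJetGraph (fun q => sInf (Set.range fun v => f₁ v + f₂ (q - v))) :=
  stmt11_general n f₁ f₂ φ₁ φ₂ hf₁ hf₂ hφ₁ hφ₂ hφ₁i hφ₂i hconv₁ hconv₂
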